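/- arXiv:1707.06615 — 5 statements merged into one kernel-verified Lean document; each statement's English description precedes it below -/
import Mathlib

section
/- A finite group H is nilpotent if and only if the diagonal homomorphism H → H × H, h ↦ (h,h), has the right lifting property with respect to every group homomorphism f : A → B that has the left lifting property with respect to the homomorphism 1 → G from the trivial group, for every group G. That is: H is nilpotent iff for every group homomorphism f : A → B such that (for all groups G, f ⧄ (1 → G)), one has f ⧄ (Δ : H → H × H). -/
/-- `f` has the left lifting property with respect to `g` in the category of groups. -/
def GroupLift {A B X Y : Type*} [Group A] [Group B] [Group X] [Group Y]
    (f : A →* B) (g : X →* Y) : Prop :=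
  ∀ (u : A →* X) (v : B →* Y), g.comp u = v.comp f →
    ∃ w : B →* X, w.comp f = u ∧ g.comp w = v

/-!
`f ⧄ (1 → G)` for all `G` says that every homomorphism out of `B` killing the image of `f` is
trivial, and `f ⧄ Δ_H` says that two homomorphisms `B → H` agreeing on the image of `f` are equal.

If `H` is nilpotent, induct on the nilpotency class: two such homomorphisms `v₁, v₂` agree modulo
the centre `Z(H)`, so `b ↦ v₁(b)⁻¹ v₂(b)` is a homomorphism into the finite group `Z(H)` killing
the image of `f`, hence trivial.

If `H` is finite but not nilpotent, its lower central series stabilises at some `K ≠ 1` with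
`[K, H] = K`. The diagonal `H → P = {(a, b) | a⁻¹ b ∈ K}` normally generates `P`, because the
normal closure of the diagonal contains `1 × [K, H] = 1 × K`; but the two projections `P → H`
agree on the diagonal and differ on `1 × K`.
-/

open scoped commutatorElement

open Subgroup

section Lifting

variable {A B X Y A' B' : Type*} [Group A] [Group B] [Group X] [Group Y] [Group A'] [Group B']

theorem groupLift_one_iff (f : A →* B) (G : Type*) [Group G] :
    GroupLift f (1 : PUnit →* G) ↔ ∀ v : B →* G, v.comp f = 1 → v = 1 := by
  constructor
  · intro hf v hv
    obtain ⟨w, -, hw⟩ := hf 1 v (by rw [hv, MonoidHom.one_comp])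
    rw [← hw, MonoidHom.one_comp]
  · intro hf u v h
    refine ⟨1, MonoidHom.ext fun _ => Subsingleton.elim _ _, ?_⟩
    rw [MonoidHom.one_comp, hf v (h.symm.trans (MonoidHom.one_comp u))]

theorem groupLift_prod_id_iff (f : A →* B) (H : Type*) [Group H] :
    GroupLift f ((MonoidHom.id H).prod (MonoidHom.id H)) ↔
      ∀ v₁ v₂ : B →* H, v₁.comp f = v₂.comp f → v₁ = v₂ := by
  constructor
  · intro hf v₁ v₂ h
    obtain ⟨w, -, hw⟩ := hf (v₁.comp f) (v₁.prod v₂) (by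
      ext a
      · rfl
      · exact DFunLike.congr_fun h a)
    have hw' : ∀ b, w b = v₁ b ∧ w b = v₂ b := fun b => by
      simpa using DFunLike.congr_fun hw b
    ext b
    rw [← (hw' b).1, (hw' b).2]
  · intro hf u v h
    have hv : ∀ a, v (f a) = (u a, u a) := fun a => by simpa using (DFunLike.congr_fun h a).symm
    have h₁₂ := hf ((MonoidHom.fst H H).comp v) ((MonoidHom.snd H H).comp v) (by ext a; simp [hv])
    refine ⟨(MonoidHom.fst H H).comp v, by ext a; simp [hv], ?_⟩
    ext b
    · rfl
    · exact DFunLike.congr_fun h₁₂ b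

theorem GroupLift.of_mulEquiv {f : A →* B} {g : X →* Y} (hf : GroupLift f g) (e₁ : A ≃* A')
    (e₂ : B ≃* B') {f' : A' →* B'} (he : ∀ a, f' (e₁ a) = e₂ (f a)) : GroupLift f' g := by
  intro u v h
  obtain ⟨w, hwf, hwg⟩ := hf (u.comp e₁.toMonoidHom) (v.comp e₂.toMonoidHom) (by
    ext a
    simpa [he] using DFunLike.congr_fun h (e₁ a))
  refine ⟨w.comp e₂.symm.toMonoidHom, ?_, ?_⟩
  · ext a'
    obtain ⟨a, rfl⟩ := e₁.surjective a'
    simpa [he] using DFunLike.congr_fun hwf a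
  · ext b'
    obtain ⟨b, rfl⟩ := e₂.surjective b'
    simpa using DFunLike.congr_fun hwg b

theorem eq_one_of_comp_eq_one_of_finite.{w} {f : A →* B}
    (hf : ∀ (G : Type w) [Group G], GroupLift f (1 : PUnit →* G)) {Q : Type*} [Group Q]
    [Finite Q] (v : B →* Q) (hv : v.comp f = 1) : v = 1 := by
  let e : Shrink.{w} Q ≃* Q := Shrink.mulEquiv
  have hv' := (groupLift_one_iff f _).1 (hf (Shrink Q)) (e.symm.toMonoidHom.comp v) (by
    rw [MonoidHom.comp_assoc, hv, MonoidHom.comp_one])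
  ext b
  simpa using DFunLike.congr_fun hv' b

end Lifting

section Nilpotent

def diffToCenter {B H : Type*} [Group B] [Group H] (v₁ v₂ : B →* H)
    (hv : ∀ b, (v₁ b)⁻¹ * v₂ b ∈ center H) : B →* center H where
  toFun b := ⟨(v₁ b)⁻¹ * v₂ b, hv b⟩
  map_one' := by simp
  map_mul' b c := by
    ext
    simp only [map_mul, mul_inv_rev, Subgroup.coe_mul]
    calc (v₁ c)⁻¹ * (v₁ b)⁻¹ * (v₂ b * v₂ c)
        = (v₁ c)⁻¹ * ((v₁ b)⁻¹ * v₂ b) * v₂ c := by group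
      _ = (v₁ b)⁻¹ * v₂ b * ((v₁ c)⁻¹ * v₂ c) := by
        rw [mem_center_iff.1 (hv b)]; group

theorem eq_of_comp_eq_of_isNilpotent.{u} {A B : Type*} [Group A] [Group B] {f : A →* B}
    (hf : ∀ (Q : Type u) [Group Q] [Finite Q] (v : B →* Q), v.comp f = 1 → v = 1)
    (H : Type u) [Group H] [Group.IsNilpotent H] [Finite H] {v₁ v₂ : B →* H}
    (h : v₁.comp f = v₂.comp f) : v₁ = v₂ := by
  refine Group.nilpotent_center_quotient_ind
    (P := fun G _ _ => Finite G → ∀ v₁ v₂ : B →* G, v₁.comp f = v₂.comp f → v₁ = v₂) H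
    (fun G _ _ _ v₁ v₂ _ => MonoidHom.ext fun _ => Subsingleton.elim _ _) ?_ ‹_› v₁ v₂ h
  intro G _ _ ih _ v₁ v₂ h
  let π := QuotientGroup.mk' (center G)
  have hπ : π.comp v₁ = π.comp v₂ :=
    ih (Finite.of_surjective π (QuotientGroup.mk'_surjective _)) _ _ (by
      rw [MonoidHom.comp_assoc, h, MonoidHom.comp_assoc])
  have hZ : ∀ b, (v₁ b)⁻¹ * v₂ b ∈ center G := fun b => QuotientGroup.eq.1 (DFunLike.congr_fun hπ b)
  have hδ := hf (center G) (diffToCenter v₁ v₂ hZ) (by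
    ext a
    simp [diffToCenter, show v₁ (f a) = v₂ (f a) from DFunLike.congr_fun h a])
  ext b
  exact inv_mul_eq_one.1 (congrArg Subtype.val (DFunLike.congr_fun hδ b))

theorem groupLift_prod_id_of_isNilpotent.{w} {H : Type*} [Group H] [Group.IsNilpotent H] [Finite H]
    {A B : Type*} [Group A] [Group B] {f : A →* B}
    (hf : ∀ (G : Type w) [Group G], GroupLift f (1 : PUnit →* G)) :
    GroupLift f ((MonoidHom.id H).prod (MonoidHom.id H)) :=
  (groupLift_prod_id_iff f H).2 fun _ _ =>
    eq_of_comp_eq_of_isNilpotent (fun _ _ _ => eq_one_of_comp_eq_one_of_finite hf) H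

end Nilpotent

section NonNilpotent

variable {H : Type*} [Group H]

theorem exists_lowerCentralSeries_succ_eq [WellFoundedLT (Subgroup H)] :
    ∃ n, (⊤ : Subgroup H).lowerCentralSeries (n + 1) = (⊤ : Subgroup H).lowerCentralSeries n := by
  obtain ⟨n, hn⟩ :=
    WellFoundedLT.antitone_chain_condition (⊤ : Subgroup H).lowerCentralSeries_antitone
  exact ⟨n, (hn (n + 1) n.le_succ).symm⟩

def congrPairs (K : Subgroup H) [K.Normal] : Subgroup (H × H) :=
  ((QuotientGroup.mk' K).comp (MonoidHom.fst H H)).eqLocus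
    ((QuotientGroup.mk' K).comp (MonoidHom.snd H H))

theorem mem_congrPairs {K : Subgroup H} [K.Normal] {p : H × H} :
    p ∈ congrPairs K ↔ p.1⁻¹ * p.2 ∈ K :=
  QuotientGroup.eq

def congrPairsDiag (K : Subgroup H) [K.Normal] : H →* congrPairs K :=
  ((MonoidHom.id H).prod (MonoidHom.id H)).codRestrict _ fun h => by simp [mem_congrPairs]

theorem eq_one_of_comp_congrPairsDiag_eq_one {K : Subgroup H} [K.Normal] (hK : ⁅K, ⊤⁆ = K)
    {G : Type*} [Group G] (v : congrPairs K →* G) (hv : v.comp (congrPairsDiag K) = 1) :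
    v = 1 := by
  have hdiag : ∀ h, v (congrPairsDiag K h) = 1 := fun h => DFunLike.congr_fun hv h
  have hK_ker : K ≤ (v.ker.map (congrPairs K).subtype).comap (MonoidHom.inr H H) := by
    refine hK.symm.le.trans (commutator_le.2 fun k hk h _ => ?_)
    refine ⟨⁅(⟨(1, k), by simpa [mem_congrPairs]⟩ : congrPairs K), congrPairsDiag K h⁆, ?_, ?_⟩
    · rw [SetLike.mem_coe, MonoidHom.mem_ker, map_commutatorElement, hdiag,
        commutatorElement_one_right]
    · ext <;> simp [congrPairsDiag, commutatorElement_def]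
  ext ⟨⟨a, b⟩, hab⟩
  obtain ⟨x, hxker, hxab⟩ := hK_ker (mem_congrPairs.1 hab)
  have hx : (x : H × H) = (1, a⁻¹ * b) := hxab
  have hsplit : (⟨(a, b), hab⟩ : congrPairs K) = congrPairsDiag K a * x := by
    ext <;> simp [congrPairsDiag, hx]
  rw [hsplit, map_mul, hdiag, MonoidHom.mem_ker.1 hxker, one_mul, MonoidHom.one_apply]

theorem eq_bot_of_groupLift_congrPairsDiag {K : Subgroup H} [K.Normal]
    (hK : GroupLift (congrPairsDiag K) ((MonoidHom.id H).prod (MonoidHom.id H))) : K = ⊥ := by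
  have hproj := (groupLift_prod_id_iff _ H).1 hK
    ((MonoidHom.fst H H).comp (congrPairs K).subtype)
    ((MonoidHom.snd H H).comp (congrPairs K).subtype) rfl
  refine (eq_bot_iff_forall K).2 fun k hk => ?_
  simpa using (DFunLike.congr_fun hproj ⟨(1, k), by simpa [mem_congrPairs]⟩).symm

theorem isNilpotent_of_forall_groupLift_prod_id.{a, b, w} [Finite H]
    (hH : ∀ (A : Type a) (B : Type b) [Group A] [Group B] (f : A →* B),
      (∀ (G : Type w) [Group G], GroupLift f (1 : PUnit →* G)) →
        GroupLift f ((MonoidHom.id H).prod (MonoidHom.id H))) :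
    Group.IsNilpotent H := by
  obtain ⟨n, hn⟩ := exists_lowerCentralSeries_succ_eq (H := H)
  set K := (⊤ : Subgroup H).lowerCentralSeries n
  have hdiag (G : Type w) [Group G] : GroupLift (congrPairsDiag K) (1 : PUnit →* G) :=
    (groupLift_one_iff _ G).2 fun v => eq_one_of_comp_congrPairsDiag_eq_one hn v
  let e₁ : H ≃* Shrink.{a} H := Shrink.mulEquiv.symm
  let e₂ : congrPairs K ≃* Shrink.{b} (congrPairs K) := Shrink.mulEquiv.symm
  let f : Shrink.{a} H →* Shrink.{b} (congrPairs K) :=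
    e₂.toMonoidHom.comp ((congrPairsDiag K).comp e₁.symm.toMonoidHom)
  have hf := hH _ _ f fun G _ => (hdiag G).of_mulEquiv e₁ e₂ fun a => by simp [f]
  have hK := hf.of_mulEquiv e₁.symm e₂.symm (f' := congrPairsDiag K) fun a => by simp [f]
  exact Subgroup.nilpotent_iff_lowerCentralSeries.2 ⟨n, eq_bot_of_groupLift_congrPairsDiag hK⟩

end NonNilpotent

/-- A finite group `H` is nilpotent iff the diagonal `H → H × H` has the right lifting
property with respect to every homomorphism having the left lifting property with
respect to `1 → G` for every group `G`. -/
theorem stmt0 {H : Type*} [Group H] [Finite H] :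
    Group.IsNilpotent H ↔
      ∀ (A B : Type*) [Group A] [Group B] (f : A →* B),
        (∀ (G : Type*) [Group G], GroupLift f (1 : PUnit →* G)) →
          GroupLift f ((MonoidHom.id H).prod (MonoidHom.id H)) :=
  ⟨fun _ _ _ _ _ _ hf => groupLift_prod_id_of_isNilpotent hf,
    isNilpotent_of_forall_groupLift_prod_id⟩
end

section
/- A finite group H is solvable if and only if the homomorphism 1 → H from the trivial group has the right lifting property with respect to every group homomorphism f : A → B that has the left lifting property with respect to 1 → C for every abelian group C. That is: H is solvable iff for every group homomorphism f : A → B such that (for all abelian groups C, f ⧄ (1 → C)), one has f ⧄ (1 → H). -/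
/-!
For `g = (1 → X)` a lifting problem against `f : A → B` is just a homomorphism `v : B → X` killing
`f(A)`, and a solution exists iff `v = 1`. Since `ℚ/ℤ`-valued characters separate points of abelian
groups, `f ⧄ (1 → C)` for all abelian `C` says exactly that `B = f(A) [B, B]`. The image of any
`v : B → H` killing `f(A)` is then a perfect subgroup of `H`, hence trivial if `H` is solvable.
Conversely, a finite non-solvable `H` has a nontrivial perfect subgroup `K`, and `1 → K` lifts
against every `1 → C` with `C` abelian but not against `1 → H`.
-/

universe w

theorem groupLift_one_punit_iff {A B X : Type*} [Group A] [Group B] [Group X] (f : A →* B) :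
    GroupLift f (1 : PUnit →* X) ↔ ∀ v : B →* X, v.comp f = 1 → v = 1 := by
  constructor
  · intro h v hv
    obtain ⟨w, -, hw⟩ := h 1 v (by rw [hv, MonoidHom.one_comp])
    rw [← hw, MonoidHom.one_comp]
  · intro h u v huv
    refine ⟨1, MonoidHom.ext fun _ => rfl, ?_⟩
    rw [h v (by rw [← huv, MonoidHom.one_comp]), MonoidHom.one_comp]

/-- `ULift` makes `ℚ/ℤ` available as a test object in whichever universe the test groups live. -/
theorem CommGroup.exists_monoidHom_addCircle_ne_one {G : Type*} [CommGroup G] {g : G}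
    (hg : g ≠ 1) : ∃ χ : G →* ULift.{w} (Multiplicative (AddCircle (1 : ℚ))), χ g ≠ 1 := by
  obtain ⟨c, hc⟩ :=
    CharacterModule.exists_character_apply_ne_zero_of_ne_zero (a := Additive.ofMul g) hg
  refine ⟨MulEquiv.ulift.symm.toMonoidHom.comp (AddMonoidHom.toMultiplicativeRight c), ?_⟩
  exact fun h1 => hc (congrArg (fun x => Multiplicative.toAdd x.down) h1)

theorem MonoidHom.range_sup_commutator_eq_top {A B : Type*} [Group A] [Group B] {f : A →* B}
    (hf : ∀ (C : Type w) [CommGroup C] (χ : B →* C), χ.comp f = 1 → χ = 1) :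
    f.range ⊔ commutator B = ⊤ := by
  set N := f.range ⊔ commutator B
  have : N.Normal := .of_commutator_le _ le_sup_right
  let _ : CommGroup (B ⧸ N) :=
    { mul_comm := isMulCommutative_iff.mp
        (Subgroup.Normal.quotient_commutative_iff_commutator_le.mpr le_sup_right) }
  rw [eq_top_iff]
  intro b _
  by_contra hb
  obtain ⟨χ, hχ⟩ := CommGroup.exists_monoidHom_addCircle_ne_one.{w}
    (g := (b : B ⧸ N)) (by rwa [Ne, QuotientGroup.eq_one_iff])
  have hχf : (χ.comp (QuotientGroup.mk' N)).comp f = 1 := by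
    ext a
    have hfa : ((f a : B) : B ⧸ N) = 1 :=
      (QuotientGroup.eq_one_iff _).mpr (Subgroup.mem_sup_left ⟨a, rfl⟩)
    simp [hfa]
  exact hχ (DFunLike.congr_fun (hf _ _ hχf) b)

theorem MonoidHom.commutator_range_eq_range {A B H : Type*} [Group A] [Group B] [Group H]
    {f : A →* B} (hf : ∀ (C : Type w) [CommGroup C] (χ : B →* C), χ.comp f = 1 → χ = 1)
    (v : B →* H) (hv : v.comp f = 1) : ⁅v.range, v.range⁆ = v.range := by
  calc ⁅v.range, v.range⁆ = (commutator B).map v := by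
        rw [commutator_def, Subgroup.map_commutator, ← MonoidHom.range_eq_map]
    _ = (f.range ⊔ commutator B).map v := by
        rw [Subgroup.map_sup, MonoidHom.map_range, hv, MonoidHom.range_one, bot_sup_eq]
    _ = v.range := by rw [range_sup_commutator_eq_top hf, ← MonoidHom.range_eq_map]

theorem Subgroup.eq_bot_of_commutator_eq_self {H : Type*} [Group H] {K : Subgroup H}
    (hK : ⁅K, K⁆ = K) (h : ∀ (B : Type w) [Group B] (v : B →* H),
      (∀ (C : Type*) [CommGroup C] (χ : B →* C), χ = 1) → v = 1) [Small.{w} K] :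
    K = ⊥ := by
  let e : Shrink.{w} K ≃* K := Shrink.mulEquiv
  have hperfect : _root_.commutator K = ⊤ := by
    apply Subgroup.map_injective K.subtype_injective
    rw [K.map_subtype_commutator, ← MonoidHom.range_eq_map, K.range_subtype, hK]
  have hv := h (Shrink K) (K.subtype.comp e.toMonoidHom) fun C _ χ => by
    ext y
    have hy : e y ∈ _root_.commutator K := hperfect ▸ Subgroup.mem_top (e y)
    simpa using Abelianization.commutator_subset_ker (χ.comp e.symm.toMonoidHom) hy
  rw [Subgroup.eq_bot_iff_forall]
  intro x hx
  simpa using DFunLike.congr_fun hv (e.symm ⟨x, hx⟩)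

/-- A finite group `H` is solvable iff `1 → H` has the right lifting property with
respect to every homomorphism having the left lifting property with respect to
`1 → C` for every abelian group `C`. -/
theorem stmt1 {H : Type*} [Group H] [Finite H] :
    IsSolvable H ↔
      ∀ (A B : Type*) [Group A] [Group B] (f : A →* B),
        (∀ (C : Type*) [CommGroup C], GroupLift f (1 : PUnit →* C)) →
          GroupLift f (1 : PUnit →* H) := by
  simp only [groupLift_one_punit_iff]
  refine (Group.isSolvable_iff_commutator_lt (G := H)).trans ⟨?_, ?_⟩
  · intro hsolv A B _ _ f hf v hv
    rw [← MonoidHom.range_eq_bot_iff]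
    by_contra hne
    exact (hsolv v.range hne).ne (MonoidHom.commutator_range_eq_range hf v hv)
  · intro h K hK
    refine lt_of_le_of_ne K.commutator_le_self fun hKK => hK ?_
    exact K.eq_bot_of_commutator_eq_self hKK fun B _ v hB =>
      h PUnit B 1 (fun C _ χ _ => hB C χ) v (MonoidHom.ext fun _ => by simp)
end

section
/- A metric space X is complete if and only if for every uniformly continuous map f : S → X there exists a uniformly continuous map g : S₀ → X whose restriction to S equals f, where S = {1/(n+1) : n ∈ ℕ} and S₀ = S ∪ {0} are equipped with the metric induced from the real line. -/
/-!
Completeness gives the extension because `S` is dense in `S₀` and the inclusion is isometric, so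
a uniformly continuous map extends to the closure. Conversely, a Cauchy sequence `u` gives a
uniformly continuous map `1/(n+1) ↦ u n` on `S`: the point `1/(m+1)` is at distance at least
`1/((N+1)(N+2))` from every other point of `S` as soon as `m ≤ N`, so points of `S` that are
closer than that are equal or both have index beyond `N`. The value of the extension at `0` is
then the limit of `u`.
-/

open Filter Topology

/-- The subset `{1/(n+1) : n ∈ ℕ}` of the real line. -/
def seqSet : Set ℝ := {x | ∃ n : ℕ, x = 1 / (n + 1)}

/-- The subset `{1/(n+1) : n ∈ ℕ} ∪ {0}` of the real line. -/
def seqSet₀ : Set ℝ := seqSet ∪ {0}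

lemma one_div_succ_injective : Function.Injective fun n : ℕ => (1 : ℝ) / (n + 1) := by
  intro m n h
  simpa using h

noncomputable def seqSetEquiv : ℕ ≃ seqSet :=
  Equiv.ofBijective (fun n => ⟨1 / (n + 1), n, rfl⟩)
    ⟨fun _ _ h => one_div_succ_injective (congrArg Subtype.val h),
      fun ⟨_, n, hn⟩ => ⟨n, Subtype.ext hn.symm⟩⟩

lemma dist_seqSetEquiv (m n : ℕ) :
    dist (seqSetEquiv m) (seqSetEquiv n) = |1 / (m + 1 : ℝ) - 1 / (n + 1)| :=
  Real.dist_eq _ _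

lemma one_div_mul_le_one_div_sub_one_div {m n N : ℕ} (hmN : m ≤ N) (hmn : m < n) :
    1 / ((N + 1) * (N + 2) : ℝ) ≤ 1 / (m + 1 : ℝ) - 1 / (n + 1) := by
  have hmN' : (m : ℝ) ≤ N := by exact_mod_cast hmN
  have hmn' : (m : ℝ) + 1 ≤ n := by exact_mod_cast hmn
  calc 1 / ((N + 1) * (N + 2) : ℝ) ≤ 1 / ((m + 1) * (m + 2)) := by gcongr
    _ = 1 / (m + 1) - 1 / (m + 2) := by field_simp; ring
    _ ≤ 1 / (m + 1) - 1 / (n + 1) :=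
      sub_le_sub_left (one_div_le_one_div_of_le (by positivity) (by linarith)) _

lemma one_div_mul_le_abs_one_div_sub_one_div {m n N : ℕ} (hmn : m ≠ n) (hN : min m n ≤ N) :
    1 / ((N + 1) * (N + 2) : ℝ) ≤ |1 / (m + 1 : ℝ) - 1 / (n + 1)| := by
  rcases hmn.lt_or_gt with h | h
  · rw [min_eq_left h.le] at hN
    exact (one_div_mul_le_one_div_sub_one_div hN h).trans (le_abs_self _)
  · rw [min_eq_right h.le] at hN
    rw [abs_sub_comm]
    exact (one_div_mul_le_one_div_sub_one_div hN h).trans (le_abs_self _)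

lemma CauchySeq.uniformContinuous_comp_seqSetEquiv_symm {X : Type*} [PseudoMetricSpace X]
    {u : ℕ → X} (hu : CauchySeq u) : UniformContinuous (u ∘ seqSetEquiv.symm) := by
  rw [Metric.uniformContinuous_iff]
  intro ε hε
  obtain ⟨N, hN⟩ := Metric.cauchySeq_iff.mp hu ε hε
  refine ⟨1 / ((N + 1) * (N + 2)), by positivity, ?_⟩
  intro x y hxy
  obtain ⟨m, rfl⟩ := seqSetEquiv.surjective x
  obtain ⟨n, rfl⟩ := seqSetEquiv.surjective y
  simp only [Function.comp_apply, Equiv.symm_apply_apply]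
  rcases eq_or_ne m n with rfl | hmn
  · simpa using hε
  have hNmn : N < min m n := by
    by_contra! h
    rw [dist_seqSetEquiv] at hxy
    exact (one_div_mul_le_abs_one_div_sub_one_div hmn h).not_gt hxy
  exact hN m (le_of_lt (hNmn.trans_le (min_le_left m n)))
    n (le_of_lt (hNmn.trans_le (min_le_right m n)))

lemma zero_mem_closure_seqSet : (0 : ℝ) ∈ closure seqSet :=
  mem_closure_of_tendsto tendsto_one_div_add_atTop_nhds_zero_nat
    (Eventually.of_forall fun n => ⟨n, rfl⟩)

lemma denseRange_inclusion_seqSet_seqSet₀ :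
    DenseRange (Set.inclusion (Set.subset_union_left : seqSet ⊆ seqSet₀)) :=
  (denseRange_inclusion_iff _).mpr <|
    Set.union_subset subset_closure (Set.singleton_subset_iff.mpr zero_mem_closure_seqSet)

lemma tendsto_seqSetEquiv_nhds_zero :
    Tendsto (fun n => Set.inclusion (Set.subset_union_left : seqSet ⊆ seqSet₀) (seqSetEquiv n))
      atTop (𝓝 ⟨0, Or.inr rfl⟩) :=
  tendsto_subtype_rng.mpr tendsto_one_div_add_atTop_nhds_zero_nat

/-- A metric space `X` is complete iff every uniformly continuous map
`{1/(n+1) : n ∈ ℕ} → X` extends to a uniformly continuous map on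
`{1/(n+1) : n ∈ ℕ} ∪ {0}` (metrics induced from the real line). -/
theorem stmt11 {X : Type*} [MetricSpace X] :
    CompleteSpace X ↔
      ∀ f : seqSet → X, UniformContinuous f →
        ∃ g : seqSet₀ → X, UniformContinuous g ∧
          g ∘ Set.inclusion Set.subset_union_left = f := by
  constructor
  · intro _ f hf
    have hind : IsUniformInducing (Set.inclusion (Set.subset_union_left : seqSet ⊆ seqSet₀)) :=
      (Isometry.of_dist_eq (f := Set.inclusion (Set.subset_union_left : seqSet ⊆ seqSet₀))
        fun _ _ => rfl).isUniformInducing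
    have hdense := denseRange_inclusion_seqSet_seqSet₀
    exact ⟨(hind.isDenseInducing hdense).extend f, uniformContinuous_uniformly_extend hind hdense hf,
      funext (uniformly_extend_of_ind hind hdense hf)⟩
  · intro hext
    refine Metric.complete_of_cauchySeq_tendsto fun u hu => ?_
    obtain ⟨g, hg, hgu⟩ := hext _ hu.uniformContinuous_comp_seqSetEquiv_symm
    have hgu' : ∀ n, g (Set.inclusion Set.subset_union_left (seqSetEquiv n)) = u n := fun n => by
      simpa using congrFun hgu (seqSetEquiv n)
    exact ⟨_, ((hg.continuous.tendsto _).comp tendsto_seqSetEquiv_nhds_zero).congr hgu'⟩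
end

section
/- Let X be a metric space and A ⊆ X a subset equipped with the induced metric. Then A is closed in X if and only if for every uniformly continuous map f : S → A and every uniformly continuous map g : S₀ → X whose restriction to S equals the composition of f with the inclusion A ↪ X, there exists a uniformly continuous map h : S₀ → A whose restriction to S equals f and whose composition with the inclusion A ↪ X equals g. -/
lemma seqSet_pos {x : ℝ} (hx : x ∈ seqSet) : 0 < x := by
  obtain ⟨n, rfl⟩ := hx
  positivity

lemma zero_notMem_seqSet : (0 : ℝ) ∉ seqSet := fun h => lt_irrefl 0 (seqSet_pos h)

lemma seqSet₀_nonneg {x : ℝ} (hx : x ∈ seqSet₀) : 0 ≤ x := by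
  rcases hx with h | h
  · exact (seqSet_pos h).le
  · simp_all

/-- Separation: if `x ∈ S₀` is at least `ε/2` then every other point of `S₀` is at
distance at least `min (ε/2) (ε^2/8)` from it. -/
lemma seq_sep {ε x y : ℝ} (hε : 0 < ε) (hx : x ∈ seqSet₀) (hy : y ∈ seqSet₀)
    (hxε : ε / 2 ≤ x) (hne : x ≠ y) : min (ε / 2) (ε ^ 2 / 8) ≤ |x - y| := by
  have hx0 : 0 < x := lt_of_lt_of_le (by positivity) hxε
  rcases hx with hx | hx
  swap
  · exact absurd (by simpa using hx) hx0.ne'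
  obtain ⟨n, rfl⟩ := hx
  have hN0 : (0 : ℝ) ≤ (n : ℝ) := Nat.cast_nonneg n
  have h1 : ε * ((n : ℝ) + 1) ≤ 2 := by
    rw [div_le_div_iff₀ (by norm_num) (by positivity)] at hxε
    linarith
  have hε2 : ε ≤ 2 := by nlinarith
  have h2 : ε * ((n : ℝ) + 2) ≤ 4 := by nlinarith
  have hkey : ε ^ 2 / 8 ≤ 1 / (((n : ℝ) + 1) * ((n : ℝ) + 2)) := by
    rw [div_le_div_iff₀ (by norm_num) (by positivity)]
    nlinarith [mul_le_mul h1 h2 (by positivity : (0:ℝ) ≤ ε * ((n:ℝ) + 2)) (by norm_num : (0:ℝ) ≤ 2)]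
  rcases hy with hy | hy
  · obtain ⟨m, rfl⟩ := hy
    have hM0 : (0 : ℝ) ≤ (m : ℝ) := Nat.cast_nonneg m
    have hnm : n ≠ m := fun h => hne (by rw [h])
    have gap : 1 / (((n : ℝ) + 1) * ((n : ℝ) + 2)) ≤ |1 / ((n : ℝ) + 1) - 1 / ((m : ℝ) + 1)| := by
      rcases lt_or_gt_of_ne hnm with h | h
      · have hM' : (n : ℝ) + 1 ≤ (m : ℝ) := by exact_mod_cast Nat.succ_le_of_lt h
        have hle : 1 / (((n : ℝ) + 1) * ((n : ℝ) + 2)) ≤ 1 / ((n : ℝ) + 1) - 1 / ((m : ℝ) + 1) := by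
          have ha : 1 / ((m : ℝ) + 1) ≤ 1 / ((n : ℝ) + 2) := by
            apply one_div_le_one_div_of_le (by positivity); linarith
          have hb : 1 / ((n : ℝ) + 1) - 1 / ((n : ℝ) + 2)
              = 1 / (((n : ℝ) + 1) * ((n : ℝ) + 2)) := by
            rw [div_sub_div _ _ (by positivity) (by positivity)]
            ring_nf
          linarith
        exact hle.trans (le_abs_self _)
      · have hM' : (m : ℝ) + 1 ≤ (n : ℝ) := by exact_mod_cast Nat.succ_le_of_lt h
        have hN1 : (1 : ℝ) ≤ (n : ℝ) := by linarith
        have hle : 1 / (((n : ℝ) + 1) * ((n : ℝ) + 2)) ≤ 1 / ((m : ℝ) + 1) - 1 / ((n : ℝ) + 1) := by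
          have ha : 1 / (n : ℝ) ≤ 1 / ((m : ℝ) + 1) := by
            apply one_div_le_one_div_of_le (by positivity); linarith
          have hb : 1 / (n : ℝ) - 1 / ((n : ℝ) + 1) = 1 / ((n : ℝ) * ((n : ℝ) + 1)) := by
            rw [div_sub_div _ _ (by positivity) (by positivity)]
            ring_nf
          have hc : 1 / (((n : ℝ) + 1) * ((n : ℝ) + 2)) ≤ 1 / ((n : ℝ) * ((n : ℝ) + 1)) := by
            apply one_div_le_one_div_of_le (by positivity); nlinarith
          linarith
        calc 1 / (((n : ℝ) + 1) * ((n : ℝ) + 2))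
            ≤ 1 / ((m : ℝ) + 1) - 1 / ((n : ℝ) + 1) := hle
          _ ≤ |1 / ((m : ℝ) + 1) - 1 / ((n : ℝ) + 1)| := le_abs_self _
          _ = |1 / ((n : ℝ) + 1) - 1 / ((m : ℝ) + 1)| := abs_sub_comm _ _
    calc min (ε / 2) (ε ^ 2 / 8) ≤ ε ^ 2 / 8 := min_le_right _ _
      _ ≤ 1 / (((n : ℝ) + 1) * ((n : ℝ) + 2)) := hkey
      _ ≤ |1 / ((n : ℝ) + 1) - 1 / ((m : ℝ) + 1)| := gap
  · have hy0 : y = 0 := by simpa using hy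
    subst hy0
    calc min (ε / 2) (ε ^ 2 / 8) ≤ ε / 2 := min_le_left _ _
      _ ≤ 1 / ((n : ℝ) + 1) := hxε
      _ = |1 / ((n : ℝ) + 1) - 0| := by rw [sub_zero, abs_of_pos (by positivity)]

/-- A map out of `S₀` with `dist (u x) (u y) ≤ x + y` is uniformly continuous. -/
lemma seq_core {Y : Type*} [PseudoMetricSpace Y] (u : seqSet₀ → Y)
    (hb : ∀ x y : seqSet₀, dist (u x) (u y) ≤ (x : ℝ) + (y : ℝ)) :
    UniformContinuous u := by
  rw [Metric.uniformContinuous_iff]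
  intro ε hε
  refine ⟨min (ε / 2) (ε ^ 2 / 8), by positivity, ?_⟩
  intro x y hxy
  by_cases hne : (x : ℝ) = (y : ℝ)
  · have hxyeq : x = y := Subtype.ext hne
    subst hxyeq
    simpa using hε
  have hd : |(x : ℝ) - (y : ℝ)| < min (ε / 2) (ε ^ 2 / 8) := by
    rwa [Subtype.dist_eq, Real.dist_eq] at hxy
  have hx2 : (x : ℝ) < ε / 2 := by
    by_contra h
    push_neg at h
    exact absurd hd (not_lt.mpr (seq_sep hε x.2 y.2 h hne))
  have hy2 : (y : ℝ) < ε / 2 := by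
    by_contra h
    push_neg at h
    have := seq_sep hε y.2 x.2 h (Ne.symm hne)
    rw [abs_sub_comm] at this
    exact absurd hd (not_lt.mpr this)
  calc dist (u x) (u y) ≤ (x : ℝ) + (y : ℝ) := hb x y
    _ < ε := by linarith

/-- A subset `A` of a metric space `X` (with the induced metric) is closed iff the
inclusion `{1/(n+1) : n} ↪ {1/(n+1) : n} ∪ {0}` has the left lifting property with
respect to the inclusion `A ↪ X`, in the category of metric spaces and uniformly
continuous maps. -/
theorem stmt12 {X : Type*} [MetricSpace X] (A : Set X) :
    IsClosed A ↔
      ∀ f : seqSet → A, UniformContinuous f →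
        ∀ g : seqSet₀ → X, UniformContinuous g →
          g ∘ Set.inclusion Set.subset_union_left = Subtype.val ∘ f →
            ∃ h : seqSet₀ → A, UniformContinuous h ∧
              h ∘ Set.inclusion Set.subset_union_left = f ∧ Subtype.val ∘ h = g := by
  constructor
  · intro hA f hf g hg hfg
    have hmem : ∀ x : seqSet₀, g x ∈ A := by
      intro x
      by_cases hx : (x : ℝ) ∈ seqSet
      · have hgx : g x = (f ⟨(x : ℝ), hx⟩ : X) := by
          have := congrFun hfg ⟨(x : ℝ), hx⟩
          simpa [Set.inclusion] using this
        rw [hgx]; exact (f _).2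
      · have hx0 : (x : ℝ) = 0 := by
          rcases x.2 with h | h
          · exact absurd h hx
          · simpa using h
        set u : ℕ → seqSet₀ := fun n => ⟨1 / (n + 1), Or.inl ⟨n, rfl⟩⟩ with hu
        have hulim : Filter.Tendsto u Filter.atTop (nhds x) := by
          rw [tendsto_iff_dist_tendsto_zero]
          have heq : (fun n : ℕ => dist (u n) x) = fun n : ℕ => 1 / ((n : ℝ) + 1) := by
            funext n
            rw [Subtype.dist_eq, Real.dist_eq, hx0, sub_zero]
            exact abs_of_pos (by positivity)
          rw [heq]
          exact tendsto_one_div_add_atTop_nhds_zero_nat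
        have hglim : Filter.Tendsto (g ∘ u) Filter.atTop (nhds (g x)) :=
          (hg.continuous.tendsto x).comp hulim
        refine hA.mem_of_tendsto hglim ?_
        filter_upwards with n
        show g (u n) ∈ A
        have heq : g (u n) = (f ⟨1 / ((n : ℝ) + 1), ⟨n, rfl⟩⟩ : X) := by
          have := congrFun hfg ⟨1 / ((n : ℝ) + 1), ⟨n, rfl⟩⟩
          simpa [Set.inclusion, hu] using this
        rw [heq]; exact (f _).2
    refine ⟨fun x => ⟨g x, hmem x⟩, hg.subtype_mk hmem, ?_, rfl⟩
    funext x
    apply Subtype.ext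
    exact congrFun hfg x
  · intro H
    classical
    apply isClosed_of_closure_subset
    intro a ha
    have hball : ∀ n : ℕ, ∃ y ∈ A, dist a y < 1 / ((n : ℝ) + 1) := fun n =>
      Metric.mem_closure_iff.mp ha _ (by positivity)
    choose b hbA hbd using hball
    set w : seqSet₀ → X := fun x =>
      if hx : (x : ℝ) ∈ seqSet then b hx.choose else a with hw
    have hwa : ∀ x : seqSet₀, dist (w x) a ≤ (x : ℝ) := by
      intro x
      by_cases hx : (x : ℝ) ∈ seqSet
      · have h1 : w x = b hx.choose := dif_pos hx
        have h2 : (x : ℝ) = 1 / ((hx.choose : ℝ) + 1) := hx.choose_spec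
        have h3 := (hbd hx.choose).le
        rw [← h2] at h3
        rw [h1, dist_comm]
        exact h3
      · have h1 : w x = a := dif_neg hx
        rw [h1, dist_self]
        exact seqSet₀_nonneg x.2
    have hwb : ∀ x y : seqSet₀, dist (w x) (w y) ≤ (x : ℝ) + (y : ℝ) := by
      intro x y
      have hy := hwa y
      rw [dist_comm] at hy
      calc dist (w x) (w y) ≤ dist (w x) a + dist a (w y) := dist_triangle _ _ _
        _ ≤ (x : ℝ) + (y : ℝ) := add_le_add (hwa x) hy
    have hg : UniformContinuous w := seq_core w hwb
    have hincl : UniformContinuous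
        (Set.inclusion (Set.subset_union_left) : seqSet → seqSet₀) :=
      uniformContinuous_subtype_val.subtype_mk _
    have hmemf : ∀ x : seqSet, w (Set.inclusion Set.subset_union_left x) ∈ A := by
      intro x
      have hx : ((Set.inclusion Set.subset_union_left x : seqSet₀) : ℝ) ∈ seqSet := x.2
      have h1 : w (Set.inclusion Set.subset_union_left x) = b hx.choose := dif_pos hx
      rw [h1]
      exact hbA _
    have hf : UniformContinuous
        (fun x : seqSet => (⟨w (Set.inclusion Set.subset_union_left x), hmemf x⟩ : A)) :=
      (hg.comp hincl).subtype_mk _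
    obtain ⟨h, hh, h1, h2⟩ := H _ hf w hg rfl
    have hz : (0 : ℝ) ∈ seqSet₀ := Or.inr rfl
    have hw0 : a = w ⟨0, hz⟩ := by
      rw [hw]
      beta_reduce
      have h0 : ((⟨0, hz⟩ : seqSet₀) : ℝ) ∉ seqSet := zero_notMem_seqSet
      rw [dif_neg h0]
    rw [hw0, ← congrFun h2 ⟨0, hz⟩]
    exact (h _).2
end

section
/- A topological space X is extremally disconnected (i.e. the closure of every open subset of X is open) if and only if the map ∅ → X has the left lifting property with respect to the map q : F₄ → F₃, where F₄ is the four-point space {u, z', z, v} whose closed sets are generated by {z'} and {z} (so u specializes to z', v specializes to z, and u, v are open points), F₃ is the three-point space {u, w, v} whose only nontrivial closed set is {w} (u, v open points, w closed), and q sends u ↦ u, v ↦ v, z' ↦ w, z ↦ w. Equivalently: X is extremally disconnected iff every continuous map X → F₃ factors as a continuous map X → F₄ followed by q. -/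
/-!
A continuous map `f : X → F₃` is the same as a pair of disjoint open sets `f⁻¹{u}`, `f⁻¹{v}`.
Since `{u, z'}` and `{v, z}` are complementary open sets of `F₄`, a continuous lift of `f`
through `q` amounts to a clopen set containing `f⁻¹{u}` and disjoint from `f⁻¹{v}`. So the
lifting property says exactly that disjoint open sets are separated by clopen sets: in an
extremally disconnected space `closure U` separates `U` from `V`, and conversely a clopen set
separating `U` from `(closure U)ᶜ` must be `closure U`.
-/

/-- `f` has the left lifting property with respect to `g` in the category of
topological spaces. -/
def TopLift {A B X Y : Type*} [TopologicalSpace A] [TopologicalSpace B]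
    [TopologicalSpace X] [TopologicalSpace Y] (f : A → B) (g : X → Y) : Prop :=
  ∀ (u : A → X) (v : B → Y), Continuous u → Continuous v → g ∘ u = v ∘ f →
    ∃ w : B → X, Continuous w ∧ w ∘ f = u ∧ g ∘ w = v

/-- The four-point space `{u, z', z, v}`: a set is open iff it contains `u` whenever it
contains `z'`, and contains `v` whenever it contains `z`. -/
inductive F4 : Type
  | u | z' | z | v

instance : TopologicalSpace F4 where
  IsOpen S := (F4.z' ∈ S → F4.u ∈ S) ∧ (F4.z ∈ S → F4.v ∈ S)
  isOpen_univ := ⟨fun _ => trivial, fun _ => trivial⟩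
  isOpen_inter _ _ hs ht :=
    ⟨fun h => ⟨hs.1 h.1, ht.1 h.2⟩, fun h => ⟨hs.2 h.1, ht.2 h.2⟩⟩
  isOpen_sUnion _ hS :=
    ⟨fun ⟨t, ht, hz⟩ => ⟨t, ht, (hS t ht).1 hz⟩,
     fun ⟨t, ht, hz⟩ => ⟨t, ht, (hS t ht).2 hz⟩⟩

/-- The three-point space `{u, w, v}`: a set is open iff it contains `u` and `v`
whenever it contains `w` (so `w` is the unique closed point). -/
inductive F3 : Type
  | u | w | v

instance : TopologicalSpace F3 where
  IsOpen S := F3.w ∈ S → F3.u ∈ S ∧ F3.v ∈ S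
  isOpen_univ _ := ⟨trivial, trivial⟩
  isOpen_inter _ _ hs ht h :=
    ⟨⟨(hs h.1).1, (ht h.2).1⟩, ⟨(hs h.1).2, (ht h.2).2⟩⟩
  isOpen_sUnion _ hS := fun ⟨t, ht, hw⟩ =>
    ⟨⟨t, ht, (hS t ht hw).1⟩, ⟨t, ht, (hS t ht hw).2⟩⟩

/-- The map `q : F4 → F3` sending `u ↦ u`, `v ↦ v`, `z' ↦ w`, `z ↦ w`. -/
def q : F4 → F3
  | F4.u => F3.u
  | F4.v => F3.v
  | F4.z' => F3.w
  | F4.z => F3.w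

open Set TopologicalSpace

theorem topLift_empty_elim_iff {X Y Z : Type*} [TopologicalSpace X] [TopologicalSpace Y]
    [TopologicalSpace Z] (g : Y → Z) :
    TopLift (Empty.elim : Empty → X) g ↔
      ∀ f : X → Z, Continuous f → ∃ h : X → Y, Continuous h ∧ g ∘ h = f := by
  refine ⟨fun H f hf ↦ ?_, fun H _ f _ hf _ ↦ ?_⟩
  · obtain ⟨h, hh, -, hgh⟩ := H Empty.elim f continuous_of_discreteTopology hf
      (funext (·.elim))
    exact ⟨h, hh, hgh⟩
  · obtain ⟨h, hh, hgh⟩ := H f hf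
    exact ⟨h, hh, funext (·.elim), hgh⟩

theorem extremallyDisconnected_iff_exists_isClopen {X : Type*} [TopologicalSpace X] :
    ExtremallyDisconnected X ↔ ∀ U V : Set X, IsOpen U → IsOpen V → Disjoint U V →
      ∃ A, IsClopen A ∧ U ⊆ A ∧ V ⊆ Aᶜ := by
  refine ⟨fun hX U V hU hV hUV ↦ ?_, fun H ↦ ⟨fun U hU ↦ ?_⟩⟩
  · refine ⟨closure U, ⟨isClosed_closure, hX.open_closure U hU⟩, subset_closure, ?_⟩
    exact subset_compl_comm.1 (closure_minimal (subset_compl_iff_disjoint_right.2 hUV)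
      hV.isClosed_compl)
  · obtain ⟨A, hA, hUA, hAU⟩ := H U (closure U)ᶜ hU isClosed_closure.isOpen_compl
      (disjoint_compl_right.mono_right (compl_subset_compl.2 subset_closure))
    have : closure U = A :=
      (closure_minimal hUA hA.isClosed).antisymm (compl_subset_compl.1 hAU)
    exact this ▸ hA.isOpen

namespace F3

theorem isTopologicalBasis : IsTopologicalBasis ({{u}, {v}, univ} : Set (Set F3)) := by
  refine isTopologicalBasis_of_isOpen_of_nhds ?_ fun a S ha hS ↦ ?_
  · rintro _ (rfl | rfl | rfl)
    exacts [fun h ↦ absurd h (by simp), fun h ↦ absurd h (by simp), isOpen_univ]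
  · cases a
    · exact ⟨{u}, by simp, rfl, by simpa using ha⟩
    · refine ⟨univ, by simp, trivial, fun b _ ↦ ?_⟩
      have := hS ha
      cases b <;> simp_all
    · exact ⟨{v}, by simp, rfl, by simpa using ha⟩

theorem continuous_iff {X : Type*} [TopologicalSpace X] {f : X → F3} :
    Continuous f ↔ IsOpen (f ⁻¹' {u}) ∧ IsOpen (f ⁻¹' {v}) := by
  simp [isTopologicalBasis.continuous_iff]

theorem exists_continuous_preimage_eq {X : Type*} [TopologicalSpace X] {U V : Set X}
    (hU : IsOpen U) (hV : IsOpen V) (hUV : Disjoint U V) :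
    ∃ f : X → F3, Continuous f ∧ f ⁻¹' {u} = U ∧ f ⁻¹' {v} = V := by
  classical
  let f x := if x ∈ U then u else if x ∈ V then v else w
  have hfu : f ⁻¹' {u} = U := by ext x; by_cases x ∈ U <;> by_cases x ∈ V <;> simp_all [f]
  have hfv : f ⁻¹' {v} = V := by
    ext x; by_cases x ∈ U <;> by_cases x ∈ V <;> simp_all [f, hUV.notMem_of_mem_left]
  exact ⟨f, continuous_iff.2 ⟨hfu ▸ hU, hfv ▸ hV⟩, hfu, hfv⟩

end F3

namespace F4

theorem isTopologicalBasis :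
    IsTopologicalBasis ({{u}, {v}, {u, z'}, {v, z}} : Set (Set F4)) := by
  refine isTopologicalBasis_of_isOpen_of_nhds ?_ fun a S ha hS ↦ ?_
  · rintro _ (rfl | rfl | rfl | rfl) <;> exact ⟨by simp, by simp⟩
  · cases a
    · exact ⟨{u}, by simp, rfl, by simpa using ha⟩
    · exact ⟨{u, z'}, by simp, by simp, by simpa [pair_subset_iff] using ⟨hS.1 ha, ha⟩⟩
    · exact ⟨{v, z}, by simp, by simp, by simpa [pair_subset_iff] using ⟨hS.2 ha, ha⟩⟩
    · exact ⟨{v}, by simp, rfl, by simpa using ha⟩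

theorem continuous_iff {X : Type*} [TopologicalSpace X] {g : X → F4} :
    Continuous g ↔ IsOpen (g ⁻¹' {u}) ∧ IsOpen (g ⁻¹' {v}) ∧
      IsOpen (g ⁻¹' {u, z'}) ∧ IsOpen (g ⁻¹' {v, z}) := by
  simp [isTopologicalBasis.continuous_iff]

theorem compl_pair_u_z' : ({u, z'} : Set F4)ᶜ = {v, z} := by
  ext a; cases a <;> simp

end F4

theorem exists_continuous_q_comp_eq_iff {X : Type*} [TopologicalSpace X] {f : X → F3}
    (hf : Continuous f) : (∃ g : X → F4, Continuous g ∧ q ∘ g = f) ↔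
      ∃ A : Set X, IsClopen A ∧ f ⁻¹' {F3.u} ⊆ A ∧ f ⁻¹' {F3.v} ⊆ Aᶜ := by
  classical
  constructor
  · rintro ⟨g, hg, rfl⟩
    obtain ⟨-, -, hA, hAc⟩ := F4.continuous_iff.1 hg
    refine ⟨g ⁻¹' {F4.u, F4.z'}, ⟨?_, hA⟩, fun x hx ↦ ?_, fun x hx ↦ ?_⟩
    · rw [← compl_compl (g ⁻¹' _), ← preimage_compl, F4.compl_pair_u_z']
      exact hAc.isClosed_compl
    all_goals cases h : g x <;> simp_all [q]
  · rintro ⟨A, hA, hUA, hVA⟩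
    let g x : F4 := match f x with
      | .u => .u
      | .v => .v
      | .w => if x ∈ A then .z' else .z
    have hgu : g ⁻¹' {F4.u} = f ⁻¹' {F3.u} := by
      ext x; cases h : f x <;> simp [g, h, apply_ite]
    have hgv : g ⁻¹' {F4.v} = f ⁻¹' {F3.v} := by
      ext x; cases h : f x <;> simp [g, h, apply_ite]
    have hgA : g ⁻¹' {F4.u, F4.z'} = A := by
      ext x
      cases h : f x
      · simp [g, h, hUA h]
      · by_cases hx : x ∈ A <;> simp [g, h, hx]
      · simpa [g, h] using hVA h
    obtain ⟨hfu, hfv⟩ := F3.continuous_iff.1 hf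
    refine ⟨g, F4.continuous_iff.2 ⟨hgu ▸ hfu, hgv ▸ hfv, hgA ▸ hA.isOpen, ?_⟩, ?_⟩
    · rw [← F4.compl_pair_u_z', preimage_compl, hgA]
      exact hA.isClosed.isOpen_compl
    · ext x; by_cases hx : x ∈ A <;> cases h : f x <;> simp [g, h, hx, q]

/-- A topological space `X` is extremally disconnected iff `∅ → X` has the left
lifting property with respect to `q : F4 → F3`, i.e. every continuous map `X → F3`
factors continuously through `q`. -/
theorem stmt19 {X : Type*} [TopologicalSpace X] :
    ExtremallyDisconnected X ↔ TopLift (Empty.elim : Empty → X) q := by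
  rw [topLift_empty_elim_iff, extremallyDisconnected_iff_exists_isClopen]
  constructor
  · intro hX f hf
    obtain ⟨hU, hV⟩ := F3.continuous_iff.1 hf
    exact (exists_continuous_q_comp_eq_iff hf).2 <| hX _ _ hU hV <|
      (disjoint_singleton.2 (by simp) : Disjoint {F3.u} {F3.v}).preimage f
  · intro hlift U V hU hV hUV
    obtain ⟨f, hf, rfl, rfl⟩ := F3.exists_continuous_preimage_eq hU hV hUV
    exact (exists_continuous_q_comp_eq_iff hf).1 (hlift f hf)
end
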